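/- arXiv:2109.02130 — 9 statements merged into one kernel-verified Lean document; each statement's English description precedes it below -/
import Mathlib

section
/- Let f ∈ ℤ[x] be a monic squarefree polynomial of degree n, let A, B ∈ ℤ^{n×n} both have characteristic polynomial f, and let p be a prime such that the reduction of f modulo p is squarefree in 𝔽_p[x] (equivalently, p does not divide disc(f)). Then A and B are ℤ_p-conjugate, i.e., there exists a matrix C ∈ ℤ_p^{n×n} with det C a unit of ℤ_p and A·C = C·B. -/
/-!
Over a field, a matrix whose characteristic polynomial is squarefree has a cyclic vector: an
irreducible factor `g` of the characteristic polynomial gives a nonzero vector killed by `g(M)`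
(found over `K[X]/(g)`, where `g` has a root), and adding vectors whose local minimal polynomials
are coprime multiplies those polynomials. Reducing modulo `p`, any lift `v` of a cyclic vector of
`A mod p` has a Krylov matrix `(v, Av, …, A^(n-1) v)` whose determinant is a unit of `ℤ_p`, and by
Cayley–Hamilton this matrix conjugates `A` to the companion matrix of `f`. The same holds for `B`.
-/

open Polynomial

namespace Matrix

section Field

variable {K : Type*} [Field K] {ι : Type*} [Fintype ι] [DecidableEq ι]

theorem det_aeval_eq_zero_of_irreducible_dvd_charpoly (M : Matrix ι ι K) {g : K[X]}
    (hg : Irreducible g) (hdvd : g ∣ M.charpoly) : (aeval M g).det = 0 := by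
  have := Fact.mk hg
  set φ := algebraMap K (AdjoinRoot g)
  set μ := AdjoinRoot.root g
  have hgμ : (g.map φ).IsRoot μ := AdjoinRoot.isRoot_root g
  have hchar : (M.map φ).charpoly.IsRoot μ := by
    rw [charpoly_map]
    exact hgμ.dvd (Polynomial.map_dvd φ hdvd)
  have hlin : C μ - X ∣ g.map φ := by
    rw [← neg_sub, neg_dvd]
    exact dvd_iff_isRoot.mpr hgμ
  have hlin_eval : aeval (M.map φ) (C μ - X) = scalar ι μ - M.map φ := by
    simp [scalar_apply, algebraMap_eq_diagonal]
  have hg_eval : aeval (M.map φ) (g.map φ) = (aeval M g).map φ := by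
    rw [aeval_map_algebraMap]
    exact aeval_algHom_apply (Algebra.ofId K (AdjoinRoot g)).mapMatrix M g
  have hdet := map_dvd detMonoidHom (map_dvd (aeval (M.map φ)) hlin)
  rw [hlin_eval, hg_eval, coe_detMonoidHom, ← eval_charpoly,
    hchar.eq_zero, zero_dvd_iff, ← RingHom.mapMatrix_apply, ← RingHom.map_det] at hdet
  exact (map_eq_zero_iff φ φ.injective).mp hdet

def IsLocalMinpoly (M : Matrix ι ι K) (v : ι → K) (d : K[X]) : Prop :=
  ∀ q : K[X], aeval M q *ᵥ v = 0 ↔ d ∣ q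

theorem isLocalMinpoly_zero_of_isUnit (M : Matrix ι ι K) {u : K[X]} (hu : IsUnit u) :
    IsLocalMinpoly M 0 u := fun q => by simp [hu.dvd]

theorem isLocalMinpoly_of_irreducible (M : Matrix ι ι K) {g : K[X]} (hg : Irreducible g)
    {w : ι → K} (hw : w ≠ 0) (hgw : aeval M g *ᵥ w = 0) : IsLocalMinpoly M w g := by
  intro q
  refine ⟨fun hqw => ?_, fun ⟨r, hr⟩ => ?_⟩
  · by_contra hgq
    obtain ⟨a, b, hab⟩ := (hg.coprime_iff_not_dvd).mpr hgq
    apply hw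
    calc w = aeval M (a * g + b * q) *ᵥ w := by rw [hab, map_one, one_mulVec]
      _ = 0 := by simp only [map_add, map_mul, add_mulVec, ← mulVec_mulVec, hgw, hqw,
        mulVec_zero, add_zero]
  · rw [hr, mul_comm, map_mul, ← mulVec_mulVec, hgw, mulVec_zero]

theorem IsLocalMinpoly.add {M : Matrix ι ι K} {v₁ v₂ : ι → K} {d₁ d₂ : K[X]}
    (h₁ : IsLocalMinpoly M v₁ d₁) (h₂ : IsLocalMinpoly M v₂ d₂) (hd : IsCoprime d₁ d₂) :
    IsLocalMinpoly M (v₁ + v₂) (d₁ * d₂) := by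
  intro q
  refine ⟨fun hq => hd.mul_dvd ?_ ?_, fun hdq => ?_⟩
  · refine hd.dvd_of_dvd_mul_right ((h₁ _).mp ?_)
    have h := congrArg (aeval M d₂ *ᵥ ·) hq
    simp only [mulVec_zero, mulVec_add, mulVec_mulVec, ← map_mul] at h
    rwa [(h₂ _).mpr (dvd_mul_right d₂ q), add_zero, mul_comm] at h
  · refine hd.symm.dvd_of_dvd_mul_right ((h₂ _).mp ?_)
    have h := congrArg (aeval M d₁ *ᵥ ·) hq
    simp only [mulVec_zero, mulVec_add, mulVec_mulVec, ← map_mul] at h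
    rwa [(h₁ _).mpr (dvd_mul_right d₁ q), zero_add, mul_comm] at h
  · rw [mulVec_add, (h₁ q).mpr (dvd_of_mul_right_dvd hdq),
      (h₂ q).mpr (dvd_of_mul_left_dvd hdq), add_zero]

theorem exists_isLocalMinpoly_of_dvd_charpoly (M : Matrix ι ι K) {d : K[X]}
    (hd : d ∣ M.charpoly) (hsf : Squarefree d) : ∃ v, IsLocalMinpoly M v d := by
  induction d using UniqueFactorizationMonoid.induction_on_coprime with
  | h0 => exact absurd hsf not_squarefree_zero
  | h1 hu => exact ⟨0, isLocalMinpoly_zero_of_isUnit M hu⟩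
  | hpr i hp =>
    rcases hsf.eq_zero_or_one_of_pow_of_not_isUnit hp.not_isUnit with rfl | rfl
    · exact ⟨0, isLocalMinpoly_zero_of_isUnit M isUnit_one⟩
    rw [pow_one] at hd ⊢
    have hdet := det_aeval_eq_zero_of_irreducible_dvd_charpoly M hp.irreducible hd
    obtain ⟨w, hw, hgw⟩ := exists_mulVec_eq_zero_iff.mpr hdet
    exact ⟨w, isLocalMinpoly_of_irreducible M hp.irreducible hw hgw⟩
  | hcp hxy ihx ihy =>
    obtain ⟨v₁, h₁⟩ := ihx (dvd_of_mul_right_dvd hd) hsf.of_mul_left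
    obtain ⟨v₂, h₂⟩ := ihy (dvd_of_mul_left_dvd hd) hsf.of_mul_right
    exact ⟨v₁ + v₂, h₁.add h₂ hxy.isCoprime⟩

end Field

section CommRing

variable {R : Type*} [CommRing R] {n : ℕ}

def krylov (M : Matrix (Fin n) (Fin n) R) (v : Fin n → R) : Matrix (Fin n) (Fin n) R :=
  of fun i j => (M ^ (j : ℕ) *ᵥ v) i

theorem krylov_mulVec (M : Matrix (Fin n) (Fin n) R) (v c : Fin n → R) :
    krylov M v *ᵥ c = aeval M (∑ j : Fin n, monomial j (c j)) *ᵥ v := by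
  simp only [map_sum, aeval_monomial, ← Algebra.smul_def, sum_mulVec, smul_mulVec]
  ext i
  simp [krylov, mulVec, dotProduct, mul_comm]

theorem det_krylov_ne_zero {K : Type*} [Field K] {M : Matrix (Fin n) (Fin n) K} {v : Fin n → K}
    (hv : IsLocalMinpoly M v M.charpoly) : (krylov M v).det ≠ 0 := by
  intro hdet
  obtain ⟨c, hc, hkc⟩ := exists_mulVec_eq_zero_iff.mpr hdet
  set q := (degreeLTEquiv K n).symm c
  have hq : (q : K[X]) = 0 := by
    refine eq_zero_of_dvd_of_degree_lt ((hv q).mp ?_) ?_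
    · exact (krylov_mulVec M v c).symm.trans hkc
    · rw [charpoly_degree_eq_dim, Fintype.card_fin]
      exact mem_degreeLT.mp q.2
  exact hc ((degreeLTEquiv K n).symm.map_eq_zero_iff.mp (Subtype.ext hq))

def companion (f : R[X]) : Matrix (Fin n) (Fin n) R :=
  of fun i j => if (j : ℕ) + 1 = n then -f.coeff i else if (i : ℕ) = j + 1 then 1 else 0

theorem pow_card_mulVec (M : Matrix (Fin n) (Fin n) R) (v : Fin n → R) :
    M ^ n *ᵥ v = -∑ k : Fin n, M.charpoly.coeff k • (M ^ (k : ℕ) *ᵥ v) := by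
  nontriviality R
  have h := congrArg (· *ᵥ v) (aeval_self_charpoly M)
  rw [M.charpoly_monic.as_sum, charpoly_natDegree_eq_dim, Fintype.card_fin] at h
  simp only [map_add, map_sum, map_mul, aeval_C, map_pow, aeval_X, ← Algebra.smul_def,
    add_mulVec, sum_mulVec, smul_mulVec, zero_mulVec] at h
  rw [eq_neg_iff_add_eq_zero, ← h,
    Fin.sum_univ_eq_sum_range (fun k => M.charpoly.coeff k • (M ^ k *ᵥ v))]

theorem mul_krylov_eq_krylov_mul_companion (M : Matrix (Fin n) (Fin n) R) (v : Fin n → R) :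
    M * krylov M v = krylov M v * companion M.charpoly := by
  ext i j
  have hcol : (M * krylov M v) i j = (M ^ ((j : ℕ) + 1) *ᵥ v) i := by
    rw [pow_succ', ← mulVec_mulVec]
    rfl
  rw [hcol, mul_apply]
  by_cases hj : (j : ℕ) + 1 = n
  · simp only [companion, of_apply, hj, if_true, pow_card_mulVec, Pi.neg_apply, Finset.sum_apply,
      Pi.smul_apply, smul_eq_mul, krylov, mul_neg, Finset.sum_neg_distrib, mul_comm]
  · have hlt : (j : ℕ) + 1 < n := lt_of_le_of_ne j.isLt hj
    rw [Finset.sum_eq_single ⟨(j : ℕ) + 1, hlt⟩]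
    · simp [companion, hj, krylov]
    · intro k _ hk
      have hk' : (k : ℕ) ≠ j + 1 := fun h => hk (Fin.ext h)
      simp [companion, hj, hk']
    · simp

theorem map_krylov {S : Type*} [CommRing S] (φ : R →+* S) (M : Matrix (Fin n) (Fin n) R)
    (v : Fin n → R) : (krylov M v).map φ = krylov (M.map φ) (φ ∘ v) := by
  ext i j
  simp [krylov, RingHom.map_mulVec, Matrix.map_pow]

section LocalRing

variable {K : Type*} [Field K] (φ : R →+* K)

theorem exists_isUnit_det_krylov (hφ : Function.Surjective φ)
    (hunit : ∀ x, φ x ≠ 0 → IsUnit x) (M : Matrix (Fin n) (Fin n) R)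
    (hsf : Squarefree (M.map φ).charpoly) : ∃ v, IsUnit (krylov M v).det := by
  obtain ⟨u, hu⟩ := exists_isLocalMinpoly_of_dvd_charpoly (M.map φ) dvd_rfl hsf
  refine ⟨Function.surjInv hφ ∘ u, hunit _ ?_⟩
  rw [RingHom.map_det, RingHom.mapMatrix_apply, map_krylov, ← Function.comp_assoc,
    (Function.rightInverse_surjInv hφ).comp_eq_id, Function.id_comp]
  exact det_krylov_ne_zero hu

theorem exists_isUnit_det_mul_eq_mul_of_charpoly_eq (hφ : Function.Surjective φ)
    (hunit : ∀ x, φ x ≠ 0 → IsUnit x) (A B : Matrix (Fin n) (Fin n) R)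
    (hAB : A.charpoly = B.charpoly) (hsf : Squarefree (A.map φ).charpoly) :
    ∃ C : Matrix (Fin n) (Fin n) R, IsUnit C.det ∧ A * C = C * B := by
  obtain ⟨v, hv⟩ := exists_isUnit_det_krylov φ hφ hunit A hsf
  obtain ⟨w, hw⟩ := exists_isUnit_det_krylov φ hφ hunit B
    (by rwa [charpoly_map, ← hAB, ← charpoly_map])
  have hcompanion : (krylov B w)⁻¹ * B * krylov B w = companion A.charpoly := by
    rw [hAB, mul_assoc, mul_krylov_eq_krylov_mul_companion, ← mul_assoc, nonsing_inv_mul _ hw,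
      one_mul]
  refine ⟨krylov A v * (krylov B w)⁻¹, ?_, ?_⟩
  · rw [det_mul]
    exact hv.mul (isUnit_nonsing_inv_det _ hw)
  · rw [← mul_assoc, mul_krylov_eq_krylov_mul_companion, ← hcompanion]
    simp only [mul_assoc, mul_nonsing_inv _ hw, mul_one]

end LocalRing

end CommRing

end Matrix

theorem zp_conjugate_of_squarefree_reduction_general
    (n : ℕ) (f : Polynomial ℤ)
    (A B : Matrix (Fin n) (Fin n) ℤ)
    (hA : A.charpoly = f) (hB : B.charpoly = f)
    (p : ℕ) [Fact p.Prime]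
    (hp : Squarefree (f.map (Int.castRingHom (ZMod p)))) :
    ∃ C : Matrix (Fin n) (Fin n) ℤ_[p],
      IsUnit C.det ∧ A.map (Int.cast : ℤ → ℤ_[p]) * C = C * B.map (Int.cast : ℤ → ℤ_[p]) := by
  have hunit (x : ℤ_[p]) (hx : PadicInt.toZMod x ≠ 0) : IsUnit x := by
    rwa [← IsLocalRing.notMem_maximalIdeal, ← PadicInt.ker_toZMod, RingHom.mem_ker]
  have hcharpoly (M : Matrix (Fin n) (Fin n) ℤ) :
      (M.map (Int.cast : ℤ → ℤ_[p])).charpoly = M.charpoly.map (Int.castRingHom ℤ_[p]) :=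
    Matrix.charpoly_map M (Int.castRingHom ℤ_[p])
  have hreduce : (A.map (Int.cast : ℤ → ℤ_[p])).map PadicInt.toZMod =
      A.map (Int.castRingHom (ZMod p)) := by
    simp [Matrix.map_map, Function.comp_def]
  refine Matrix.exists_isUnit_det_mul_eq_mul_of_charpoly_eq PadicInt.toZMod
    (ZMod.ringHom_surjective _) hunit _ _ ?_ ?_
  · rw [hcharpoly, hcharpoly, hA, hB]
  · rwa [hreduce, Matrix.charpoly_map, hA]

/-- If `f ∈ ℤ[x]` is monic squarefree of degree `n`, `A, B ∈ ℤ^{n×n}` both have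
characteristic polynomial `f`, and `p` is a prime such that `f mod p` is squarefree in `𝔽_p[x]`,
then `A` and `B` are `ℤ_p`-conjugate. -/
theorem zp_conjugate_of_squarefree_reduction
    (n : ℕ) (f : Polynomial ℤ) (hmonic : f.Monic) (hsf : Squarefree f)
    (hdeg : f.natDegree = n)
    (A B : Matrix (Fin n) (Fin n) ℤ)
    (hA : A.charpoly = f) (hB : B.charpoly = f)
    (p : ℕ) [Fact p.Prime]
    (hp : Squarefree (f.map (Int.castRingHom (ZMod p)))) :
    ∃ C : Matrix (Fin n) (Fin n) ℤ_[p],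
      IsUnit C.det ∧ A.map (Int.cast : ℤ → ℤ_[p]) * C = C * B.map (Int.cast : ℤ → ℤ_[p]) :=
  zp_conjugate_of_squarefree_reduction_general n f A B hA hB p hp
end

section
/- Let p be a prime and let A, B ∈ ℤ^{n×n}. If A and B are ℤ_p-conjugate (there exists C ∈ ℤ_p^{n×n} with det C a unit of ℤ_p and A·C = C·B), then there exists an integer matrix C' ∈ ℤ^{n×n} with A·C' = C'·B and p ∤ det C'; in particular A and B are conjugate by an element of GL_n(ℤ_(p)), the localization of ℤ at p. -/
/-!
The integer solutions of `A X = X B` form a `ℤ`-submodule `Λ`. Since `ℤ_p` is flat over `ℤ`,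
the solution space of `X ↦ A X - X B` commutes with base change to `ℤ_p`, so `C` is a
`ℤ_p`-linear combination of elements of `Λ`. Replacing each coefficient by an integer congruent
to it mod `p` gives `X ∈ Λ` with `X ≡ C (mod p)`, hence `det X ≡ det C ≢ 0 (mod p)`.
-/

open TensorProduct

namespace Matrix

variable {n R S : Type*} [CommRing R] [CommRing S] [Algebra R S]

def intertwiningSubmodule [Fintype n] (A B : Matrix n n R) : Submodule R (Matrix n n R) :=
  LinearMap.eqLocus (LinearMap.mulLeft R A) (LinearMap.mulRight R B)

theorem mem_intertwiningSubmodule [Fintype n] {A B X : Matrix n n R} :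
    X ∈ intertwiningSubmodule A B ↔ A * X = X * B :=
  Iff.rfl

theorem exists_mem_map_eq_of_mem_span {T : Type*} [CommRing T] (φ : S →+* T)
    (hφ : Function.Surjective (φ.comp (algebraMap R S))) (Λ : Submodule R (Matrix n n R))
    {C : Matrix n n S} (hC : C ∈ Submodule.span S ((map · (algebraMap R S)) '' Λ)) :
    ∃ X ∈ Λ, X.map (φ.comp (algebraMap R S)) = C.map φ := by
  induction hC using Submodule.span_induction with
  | mem _ hmem =>
    obtain ⟨X, hX, rfl⟩ := hmem
    exact ⟨X, hX, by rw [map_map]; rfl⟩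
  | zero => exact ⟨0, Λ.zero_mem, by simp⟩
  | add _ _ _ _ hX hY =>
    obtain ⟨X, hX, hXC⟩ := hX
    obtain ⟨Y, hY, hYD⟩ := hY
    refine ⟨X + Y, Λ.add_mem hX hY, ?_⟩
    ext i j
    simpa using congr($hXC i j + $hYD i j)
  | smul s _ _ hX =>
    obtain ⟨X, hX, hXC⟩ := hX
    obtain ⟨r, hr : φ (algebraMap R S r) = φ s⟩ := hφ (φ s)
    refine ⟨r • X, Λ.smul_mem r hX, ?_⟩
    ext i j
    simpa [hr] using congr(φ s * $hXC i j)

variable [Fintype n] [DecidableEq n]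

theorem matrixEquivTensor_symm_lTensor_mulLeft (A : Matrix n n R) (t : S ⊗[R] Matrix n n R) :
    (matrixEquivTensor n R S).symm (AlgebraTensorModule.lTensor S S (LinearMap.mulLeft R A) t) =
      A.map (algebraMap R S) * (matrixEquivTensor n R S).symm t := by
  induction t using TensorProduct.induction_on with
  | zero => simp
  | tmul s M => simp [matrixEquivTensor_apply_symm, Matrix.map_mul]
  | add t u ht hu => simp only [map_add, ht, hu, mul_add]

theorem matrixEquivTensor_symm_lTensor_mulRight (B : Matrix n n R) (t : S ⊗[R] Matrix n n R) :
    (matrixEquivTensor n R S).symm (AlgebraTensorModule.lTensor S S (LinearMap.mulRight R B) t) =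
      (matrixEquivTensor n R S).symm t * B.map (algebraMap R S) := by
  induction t using TensorProduct.induction_on with
  | zero => simp
  | tmul s M => simp [matrixEquivTensor_apply_symm, Matrix.map_mul]
  | add t u ht hu => simp only [map_add, ht, hu, add_mul]

theorem mem_span_intertwiningSubmodule_of_flat [Module.Flat R S] {A B : Matrix n n R}
    {C : Matrix n n S} (hC : A.map (algebraMap R S) * C = C * B.map (algebraMap R S)) :
    C ∈ Submodule.span S ((map · (algebraMap R S)) '' intertwiningSubmodule A B) := by
  set e := (matrixEquivTensor n R S).symm
  have hker : e.symm C ∈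
      LinearMap.eqLocus (AlgebraTensorModule.lTensor S S (LinearMap.mulLeft R A))
        (AlgebraTensorModule.lTensor S S (LinearMap.mulRight R B)) := by
    apply e.injective
    rw [matrixEquivTensor_symm_lTensor_mulLeft, matrixEquivTensor_symm_lTensor_mulRight,
      e.apply_symm_apply, hC]
  rw [Module.Flat.eqLocus_lTensor_eq] at hker
  obtain ⟨t, ht⟩ := hker
  rw [← e.apply_symm_apply C, ← ht]
  clear ht
  induction t using TensorProduct.induction_on with
  | zero => simp
  | tmul s X =>
    rw [AlgebraTensorModule.lTensor_tmul, matrixEquivTensor_apply_symm]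
    exact Submodule.smul_mem _ s (Submodule.subset_span ⟨X, X.2, rfl⟩)
  | add t u ht hu => rw [map_add, map_add]; exact Submodule.add_mem _ ht hu

end Matrix

/-- If `A, B ∈ ℤ^{n×n}` are `ℤ_p`-conjugate, then there is an integer matrix `C'`
with `A·C' = C'·B` and `p ∤ det C'`; in particular `A` and `B` are conjugate by an element of
`GL_n(ℤ_(p))`. -/
theorem int_conjugating_matrix_of_zp_conjugate
    (n : ℕ) (p : ℕ) [Fact p.Prime]
    (A B : Matrix (Fin n) (Fin n) ℤ)
    (h : ∃ C : Matrix (Fin n) (Fin n) ℤ_[p],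
      IsUnit C.det ∧ A.map (Int.cast : ℤ → ℤ_[p]) * C = C * B.map (Int.cast : ℤ → ℤ_[p])) :
    ∃ C' : Matrix (Fin n) (Fin n) ℤ, A * C' = C' * B ∧ ¬ (p : ℤ) ∣ C'.det := by
  obtain ⟨C, hCdet, hC⟩ := h
  have hreduce : (PadicInt.toZMod (p := p)).comp (algebraMap ℤ ℤ_[p]) = Int.castRingHom _ :=
    RingHom.ext_int _ _
  obtain ⟨X, hX, hXC⟩ := Matrix.exists_mem_map_eq_of_mem_span PadicInt.toZMod
    (hreduce ▸ ZMod.intCast_surjective) _ (Matrix.mem_span_intertwiningSubmodule_of_flat hC)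
  refine ⟨X, Matrix.mem_intertwiningSubmodule.1 hX, fun hdvd =>
    (hCdet.map PadicInt.toZMod).ne_zero ?_⟩
  rw [RingHom.map_det, RingHom.mapMatrix_apply, ← hXC, hreduce, ← RingHom.mapMatrix_apply,
    ← RingHom.map_det]
  exact (ZMod.intCast_zmod_eq_zero_iff_dvd _ _).2 hdvd
end

section
/- Let f ∈ ℤ[x] be a monic squarefree polynomial of degree n, let A, B ∈ ℤ^{n×n} both have characteristic polynomial f, and let p be a prime such that the reduction of f modulo p is squarefree in 𝔽_p[x]. Define the ℤ-linear map T on ℤ^{n×n} by T(X) = A·X − X·B. Then p·ℤ^{n×n} ∩ Im(T) ⊆ p·Im(T); that is, for every X ∈ ℤ^{n×n} such that every entry of A·X − X·B is divisible by p, there exists Z ∈ ℤ^{n×n} with A·X − X·B = p·(A·Z − Z·B). -/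
/-!
Let `L_A` and `R_B` be left multiplication by `A` and right multiplication by `B`; they commute and
`T = L_A - R_B`. The divided difference `D = (f(L_A) - f(R_B)) / (L_A - R_B)` satisfies
`T ∘ D = f(L_A) - f(R_B) = 0` by Cayley–Hamilton, and on `ker T` it acts as `f'(L_A)`. As `f mod p`
is separable, some `v ∈ ℤ[x]` has `f'(A) v(A) ≡ 1 mod p`. If `T X ≡ 0 mod p` then
`X₀ = D(v(A) X)` lies in `ker T` and `X₀ ≡ f'(A) v(A) X ≡ X mod p`, so `X - X₀ = p Z` and
`T X = T (X - X₀) = p T Z`.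
-/

open Polynomial Finset

section SylvesterDiff

variable {R S S' : Type*} [CommRing R] [Ring S] [Ring S'] [Algebra R S] [Algebra R S']

theorem mul_sum_pow_mul_pow_sub_sum_mul (a b y : S) (k : ℕ) :
    a * ∑ i ∈ range k, a ^ i * y * b ^ (k - 1 - i)
      - (∑ i ∈ range k, a ^ i * y * b ^ (k - 1 - i)) * b = a ^ k * y - y * b ^ k := by
  have telescope (i) (hi : i ∈ range k) :
      a * (a ^ i * y * b ^ (k - 1 - i)) - a ^ i * y * b ^ (k - 1 - i) * b
        = a ^ (i + 1) * y * b ^ (k - (i + 1)) - a ^ i * y * b ^ (k - i) := by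
    obtain ⟨j, rfl⟩ : ∃ j, k = i + 1 + j := ⟨k - (i + 1), by grind⟩
    rw [show i + 1 + j - 1 - i = j by omega, show i + 1 + j - (i + 1) = j by omega,
      show i + 1 + j - i = j + 1 by omega, pow_succ', pow_succ]
    noncomm_ring
  rw [mul_sum, sum_mul, ← sum_sub_distrib, sum_congr rfl telescope,
    sum_range_sub (fun i ↦ a ^ i * y * b ^ (k - i))]
  simp

/-- The divided difference `(f(L_a) - f(R_b)) / (L_a - R_b)` of `f` at left multiplication by `a`
and right multiplication by `b`, applied to `y`. -/
noncomputable def sylvesterDiff (f : R[X]) (a b y : S) : S :=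
  ∑ k ∈ range (f.natDegree + 1), f.coeff k • ∑ i ∈ range k, a ^ i * y * b ^ (k - 1 - i)

theorem mul_sylvesterDiff_sub (f : R[X]) (a b y : S) :
    a * sylvesterDiff f a b y - sylvesterDiff f a b y * b = aeval a f * y - y * aeval b f := by
  rw [sylvesterDiff, aeval_eq_sum_range, aeval_eq_sum_range, mul_sum, sum_mul, sum_mul, mul_sum,
    ← sum_sub_distrib, ← sum_sub_distrib]
  refine sum_congr rfl fun k _ ↦ ?_
  rw [mul_smul_comm, smul_mul_assoc, ← smul_sub, mul_sum_pow_mul_pow_sub_sum_mul, smul_mul_assoc,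
    mul_smul_comm, smul_sub]

theorem aeval_derivative_eq_sum_range (f : R[X]) (a : S) :
    aeval a (derivative f) = ∑ k ∈ range (f.natDegree + 1), (f.coeff k * k) • a ^ (k - 1) := by
  calc aeval a (derivative f) = f.sum fun k c ↦ (c * k) • a ^ (k - 1) := by
        simp [derivative_apply, Polynomial.sum_def, Algebra.smul_def]
    _ = _ := sum_over_range _ fun _ ↦ by simp

theorem sylvesterDiff_eq_of_mul_eq {a b y : S} (h : a * y = y * b) (f : R[X]) :
    sylvesterDiff f a b y = aeval a (derivative f) * y := by
  have inner (k : ℕ) : ∑ i ∈ range k, a ^ i * y * b ^ (k - 1 - i) = k • (a ^ (k - 1) * y) := by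
    calc ∑ i ∈ range k, a ^ i * y * b ^ (k - 1 - i) = ∑ i ∈ range k, a ^ (k - 1) * y :=
          sum_congr rfl fun i hi ↦ by
            rw [mul_assoc, (SemiconjBy.pow_right (a := y) h.symm _).eq, ← mul_assoc, ← pow_add,
              Nat.add_sub_cancel' (by grind)]
      _ = k • (a ^ (k - 1) * y) := by simp
  simp only [sylvesterDiff, inner, aeval_derivative_eq_sum_range, sum_mul, smul_mul_assoc]
  refine sum_congr rfl fun k _ ↦ ?_
  rw [mul_smul, ← Nat.cast_smul_eq_nsmul R]

theorem AlgHom.map_sylvesterDiff (φ : S →ₐ[R] S') (f : R[X]) (a b y : S) :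
    φ (sylvesterDiff f a b y) = sylvesterDiff f (φ a) (φ b) (φ y) := by
  simp [sylvesterDiff]

theorem exists_mul_eq_mul_and_map_eq_of_map_mul_eq (φ : S →ₐ[R] S') {f v : R[X]} {a b x : S}
    (ha : aeval a f = 0) (hb : aeval b f = 0) (hv : aeval (φ a) (derivative f * v) = 1)
    (hx : φ (a * x) = φ (x * b)) : ∃ x₀, a * x₀ = x₀ * b ∧ φ x₀ = φ x := by
  refine ⟨sylvesterDiff f a b (aeval a v * x), ?_, ?_⟩
  · have := mul_sylvesterDiff_sub f a b (aeval a v * x)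
    rwa [ha, hb, zero_mul, mul_zero, sub_zero, sub_eq_zero] at this
  · have hva : a * aeval a v = aeval a v * a := by
      simpa only [map_mul, aeval_X] using congrArg (aeval a) (X_mul (p := v))
    have hy : φ a * φ (aeval a v * x) = φ (aeval a v * x) * φ b := by
      calc φ a * φ (aeval a v * x) = φ (aeval a v) * φ (a * x) := by
            rw [← map_mul, ← map_mul, ← mul_assoc, hva, mul_assoc]
        _ = φ (aeval a v * x) * φ b := by simp only [hx, map_mul, mul_assoc]
    rw [aeval_algHom_apply, map_mul, map_mul] at hv
    rw [φ.map_sylvesterDiff, sylvesterDiff_eq_of_mul_eq hy, aeval_algHom_apply,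
      map_mul φ (aeval a v), ← mul_assoc, hv, one_mul]

end SylvesterDiff

theorem exists_aeval_derivative_mul_eq_one {R K S : Type*} [CommRing R] [Field K] [PerfectField K]
    [Ring S] [Algebra R K] [Algebra K S] [Algebra R S] [IsScalarTower R K S]
    (hsurj : Function.Surjective (algebraMap R K)) {f : R[X]}
    (hf : Squarefree (f.map (algebraMap R K))) {a : S} (ha : aeval a f = 0) :
    ∃ v : R[X], aeval a (derivative f * v) = 1 := by
  obtain ⟨u, w, huw⟩ := PerfectField.separable_iff_squarefree.mpr hf
  obtain ⟨v, rfl⟩ := map_surjective _ hsurj w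
  refine ⟨v, ?_⟩
  have := congrArg (aeval a) huw
  rw [← aeval_map_algebraMap K, Polynomial.map_mul, ← derivative_map, mul_comm]
  simpa [ha] using this

theorem Matrix.exists_eq_smul_of_forall_dvd {m n α : Type*} [CommMonoid α] {c : α}
    {M : Matrix m n α} (h : ∀ i j, c ∣ M i j) : ∃ Z : Matrix m n α, M = c • Z := by
  choose Z hZ using h
  exact ⟨Matrix.of Z, by ext i j; simp [hZ]⟩

theorem Matrix.intCast_mapMatrix_eq_zero_iff {m : Type*} [Fintype m] [DecidableEq m] (p : ℕ)
    (M : Matrix m m ℤ) :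
    (Algebra.ofId ℤ (ZMod p)).mapMatrix M = 0 ↔ ∀ i j, (p : ℤ) ∣ M i j := by
  simp [← Matrix.ext_iff, ZMod.intCast_zmod_eq_zero_iff_dvd]

theorem sylvester_map_p_saturation_general
    (n : ℕ) (f : Polynomial ℤ)
    (A B : Matrix (Fin n) (Fin n) ℤ)
    (hA : A.charpoly = f) (hB : B.charpoly = f)
    (p : ℕ) (hp : p.Prime)
    (hred : Squarefree (f.map (Int.castRingHom (ZMod p)))) :
    ∀ X : Matrix (Fin n) (Fin n) ℤ,
      (∀ i j, (p : ℤ) ∣ (A * X - X * B) i j) →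
      ∃ Z : Matrix (Fin n) (Fin n) ℤ, A * X - X * B = (p : ℤ) • (A * Z - Z * B) := by
  intro X hX
  have := Fact.mk hp
  let ψ := (Algebra.ofId ℤ (ZMod p)).mapMatrix (m := Fin n)
  have hfA : aeval A f = 0 := hA ▸ A.aeval_self_charpoly
  have hfB : aeval B f = 0 := hB ▸ B.aeval_self_charpoly
  obtain ⟨v, hv⟩ := exists_aeval_derivative_mul_eq_one (K := ZMod p) ZMod.intCast_surjective
    (by rwa [algebraMap_int_eq]) (a := ψ A) (by rw [aeval_algHom_apply, hfA, map_zero])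
  obtain ⟨X₀, hX₀, hψX₀⟩ := exists_mul_eq_mul_and_map_eq_of_map_mul_eq ψ hfA hfB hv <| by
    rw [← sub_eq_zero, ← map_sub, Matrix.intCast_mapMatrix_eq_zero_iff]
    exact hX
  obtain ⟨Z, hZ⟩ := Matrix.exists_eq_smul_of_forall_dvd <|
    (Matrix.intCast_mapMatrix_eq_zero_iff p (X - X₀)).mp (by rw [map_sub, hψX₀, sub_self])
  refine ⟨Z, ?_⟩
  calc A * X - X * B = A * (X - X₀) - (X - X₀) * B := by rw [mul_sub, sub_mul, hX₀]; abel
    _ = (p : ℤ) • (A * Z - Z * B) := by rw [hZ, mul_smul_comm, smul_mul_assoc, smul_sub]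

/-- With `f` monic squarefree of degree `n`, `A, B` having characteristic
polynomial `f`, and `p` a prime for which `f mod p` is squarefree, the Sylvester map
`T(X) = A·X − X·B` satisfies `p·ℤ^{n×n} ∩ Im(T) ⊆ p·Im(T)`. -/
theorem sylvester_map_p_saturation
    (n : ℕ) (f : Polynomial ℤ) (hmonic : f.Monic) (hsf : Squarefree f)
    (hdeg : f.natDegree = n)
    (A B : Matrix (Fin n) (Fin n) ℤ)
    (hA : A.charpoly = f) (hB : B.charpoly = f)
    (p : ℕ) (hp : p.Prime)
    (hred : Squarefree (f.map (Int.castRingHom (ZMod p)))) :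
    ∀ X : Matrix (Fin n) (Fin n) ℤ,
      (∀ i j, (p : ℤ) ∣ (A * X - X * B) i j) →
      ∃ Z : Matrix (Fin n) (Fin n) ℤ, A * X - X * B = (p : ℤ) • (A * Z - Z * B) :=
  sylvester_map_p_saturation_general n f A B hA hB p hp hred
end

section
/- Let A, B ∈ ℤ^{n×n}, let p be a prime, and define T(X) = A·X − X·B on ℤ^{n×n}. Suppose (i) p·ℤ^{n×n} ∩ Im(T) ⊆ p·Im(T), i.e., whenever every entry of T(X) is divisible by p there exists Z with T(X) = p·T(Z); and (ii) there exists C ∈ ℤ^{n×n} such that every entry of A·C − C·B is divisible by p and p ∤ det C. Then there exists C' ∈ ℤ^{n×n} with A·C' = C'·B and p ∤ det C'; hence A and B are conjugate by an element of GL_n(ℤ_(p)). -/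
/-!
Correcting `C` by `p • Z`, where `A C - C B = p (A Z - Z B)` as provided by the saturation
hypothesis, gives an exact intertwiner `C - p • Z`; its determinant is congruent to `det C`
modulo `p`, so it is still not divisible by `p`.
-/

namespace Matrix

variable {m R : Type*} [Fintype m] [CommRing R]

def sylvester (A B : Matrix m m R) : Matrix m m R →ₗ[R] Matrix m m R :=
  LinearMap.mulLeft R A - LinearMap.mulRight R B

theorem sylvester_apply (A B X : Matrix m m R) : sylvester A B X = A * X - X * B := rfl

theorem dvd_det_sub_smul_sub_det [DecidableEq m] (a : R) (M N : Matrix m m R) :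
    a ∣ (M - a • N).det - M.det := by
  rw [← Ideal.mem_span_singleton, ← Ideal.Quotient.mk_eq_mk_iff_sub_mem, RingHom.map_det,
    RingHom.map_det]
  congr 1
  ext i j
  simp [Ideal.Quotient.eq_zero_iff_mem.mpr (Ideal.mem_span_singleton_self a)]

theorem dvd_det_sub_smul_iff [DecidableEq m] (a : R) (M N : Matrix m m R) :
    a ∣ (M - a • N).det ↔ a ∣ M.det :=
  dvd_iff_dvd_of_dvd_sub (dvd_det_sub_smul_sub_det a M N)

end Matrix

open Matrix in
theorem lift_mod_p_conjugation_general
    (n : ℕ) (p : ℕ)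
    (A B : Matrix (Fin n) (Fin n) ℤ)
    (hsat : ∀ X : Matrix (Fin n) (Fin n) ℤ,
      (∀ i j, (p : ℤ) ∣ (A * X - X * B) i j) →
      ∃ Z : Matrix (Fin n) (Fin n) ℤ, A * X - X * B = (p : ℤ) • (A * Z - Z * B))
    (hC : ∃ C : Matrix (Fin n) (Fin n) ℤ,
      (∀ i j, (p : ℤ) ∣ (A * C - C * B) i j) ∧ ¬ (p : ℤ) ∣ C.det) :
    ∃ C' : Matrix (Fin n) (Fin n) ℤ, A * C' = C' * B ∧ ¬ (p : ℤ) ∣ C'.det := by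
  obtain ⟨C, hdiv, hdet⟩ := hC
  obtain ⟨Z, hZ⟩ := hsat C hdiv
  have hkernel : sylvester A B (C - (p : ℤ) • Z) = 0 := by
    rw [map_sub, map_smul, sylvester_apply, sylvester_apply, hZ, sub_self]
  exact ⟨C - (p : ℤ) • Z, sub_eq_zero.mp hkernel, (dvd_det_sub_smul_iff _ C Z).not.mpr hdet⟩

/-- If `T(X) = A·X − X·B` satisfies `p·ℤ^{n×n} ∩ Im(T) ⊆ p·Im(T)` and there is
`C` with all entries of `A·C − C·B` divisible by `p` and `p ∤ det C`, then there is
`C'` with `A·C' = C'·B` and `p ∤ det C'`. -/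
theorem lift_mod_p_conjugation
    (n : ℕ) (p : ℕ) (hp : p.Prime)
    (A B : Matrix (Fin n) (Fin n) ℤ)
    (hsat : ∀ X : Matrix (Fin n) (Fin n) ℤ,
      (∀ i j, (p : ℤ) ∣ (A * X - X * B) i j) →
      ∃ Z : Matrix (Fin n) (Fin n) ℤ, A * X - X * B = (p : ℤ) • (A * Z - Z * B))
    (hC : ∃ C : Matrix (Fin n) (Fin n) ℤ,
      (∀ i j, (p : ℤ) ∣ (A * C - C * B) i j) ∧ ¬ (p : ℤ) ∣ C.det) :
    ∃ C' : Matrix (Fin n) (Fin n) ℤ, A * C' = C' * B ∧ ¬ (p : ℤ) ∣ C'.det :=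
  lift_mod_p_conjugation_general n p A B hsat hC
end

section
/- Let A = [[0, 1], [−5, 0]] and B = [[−1, 2], [−3, 1]], both 2×2 integer matrices with characteristic polynomial x² + 5. Then A and B are not ℤ-conjugate: there is no C ∈ ℤ^{2×2} with det C ∈ {1, −1} and A·C = C·B. -/
/-!
Comparing the first rows of `A * C` and `C * B` forces `C = !![a, b; -a - 3b, 2a + b]`, so
`det C = 2a² + 2ab + 3b²`. This is the positive definite form of discriminant `-20` attached to
the non-principal ideal class of `ℤ[√-5]`; since `2 (2a² + 2ab + 3b²) = (2a + b)² + 5b²`, its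
smallest nonzero value is `2`, so `det C` is never a unit.
-/

theorem not_isUnit_two_mul_sq_add_two_mul_mul_add_three_mul_sq (x y : ℤ) :
    ¬ IsUnit (2 * x ^ 2 + 2 * x * y + 3 * y ^ 2) := by
  rw [Int.isUnit_iff]
  rintro (h | h)
  · have hy : y = 0 := by nlinarith [sq_nonneg (2 * x + y), sq_nonneg y]
    subst hy
    omega
  · nlinarith [sq_nonneg (2 * x + y), sq_nonneg y]

theorem det_eq_of_mul_eq_mul {C : Matrix (Fin 2) (Fin 2) ℤ}
    (h : !![0, 1; -5, 0] * C = C * !![-1, 2; -3, 1]) :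
    C.det = 2 * C 0 0 ^ 2 + 2 * C 0 0 * C 0 1 + 3 * C 0 1 ^ 2 := by
  have h₀ := congrFun (congrFun h 0) 0
  have h₁ := congrFun (congrFun h 0) 1
  simp only [Matrix.mul_apply, Fin.sum_univ_two, Matrix.of_apply, Matrix.cons_val',
    Matrix.cons_val_zero, Matrix.cons_val_one, Matrix.empty_val', Matrix.cons_val_fin_one] at h₀ h₁
  rw [Matrix.det_fin_two]
  linear_combination (-C 0 1) * h₀ + C 0 0 * h₁

/-- The matrices `A = [[0,1],[-5,0]]` and `B = [[-1,2],[-3,1]]` (both with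
characteristic polynomial `x² + 5`) are not `ℤ`-conjugate. -/
theorem not_int_conjugate_example :
    ¬ ∃ C : Matrix (Fin 2) (Fin 2) ℤ, (C.det = 1 ∨ C.det = -1) ∧
      (!![0, 1; -5, 0] : Matrix (Fin 2) (Fin 2) ℤ) * C
        = C * (!![-1, 2; -3, 1] : Matrix (Fin 2) (Fin 2) ℤ) := by
  rintro ⟨C, hdet, hmul⟩
  apply not_isUnit_two_mul_sq_add_two_mul_mul_add_three_mul_sq (C 0 0) (C 0 1)
  rw [← det_eq_of_mul_eq_mul hmul, Int.isUnit_iff]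
  exact hdet
end

section
/- Let A = [[0, 1], [−5, 0]] and B = [[−1, 2], [−3, 1]], both 2×2 integer matrices with characteristic polynomial x² + 5. Then A and B are locally conjugate: for every prime p there exists C ∈ ℤ_p^{2×2} with det C a unit of ℤ_p and A·C = C·B. -/
/-! Both `C₁ = [[0, 1], [-3, 1]]` and `C₂ = [[1, 0], [-1, 2]]` satisfy `A C = C B` over `ℤ`,
with determinants `3` and `2`. As these are coprime, every prime `p` misses one of them, and the
corresponding `Cᵢ` is invertible over `ℤ_p`. -/

namespace PadicInt

variable {p : ℕ} [Fact p.Prime]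

theorem isUnit_intCast_iff {z : ℤ} : IsUnit (z : ℤ_[p]) ↔ ¬(p : ℤ) ∣ z := by
  rw [← not_iff_not, not_not, not_isUnit_iff, norm_int_lt_one_iff_dvd]

end PadicInt

namespace Matrix

variable {n : Type*} [Fintype n] [DecidableEq n]

theorem exists_padicInt_conj_of_intertwine (p : ℕ) [Fact p.Prime] {A B C : Matrix n n ℤ}
    (hC : ¬(p : ℤ) ∣ C.det) (h : A * C = C * B) :
    ∃ D : Matrix n n ℤ_[p], IsUnit D.det ∧
      A.map (Int.cast : ℤ → ℤ_[p]) * D = D * B.map (Int.cast : ℤ → ℤ_[p]) := by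
  refine ⟨C.map Int.cast, ?_, ?_⟩
  · have hdet : (C.map Int.cast).det = (C.det : ℤ_[p]) :=
      ((Int.castRingHom ℤ_[p]).map_det C).symm
    exact hdet ▸ PadicInt.isUnit_intCast_iff.2 hC
  · have hmul (M N : Matrix n n ℤ) :
        (M * N).map (Int.cast : ℤ → ℤ_[p]) = M.map Int.cast * N.map Int.cast :=
      Matrix.map_mul (f := Int.castRingHom ℤ_[p])
    rw [← hmul, ← hmul, h]

theorem exists_padicInt_conj_of_intertwine_coprime {A B C₁ C₂ : Matrix n n ℤ}
    (h₁ : A * C₁ = C₁ * B) (h₂ : A * C₂ = C₂ * B) (hdet : IsCoprime C₁.det C₂.det)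
    (p : ℕ) [hp : Fact p.Prime] :
    ∃ D : Matrix n n ℤ_[p], IsUnit D.det ∧
      A.map (Int.cast : ℤ → ℤ_[p]) * D = D * B.map (Int.cast : ℤ → ℤ_[p]) := by
  by_cases hp₁ : (p : ℤ) ∣ C₁.det
  · refine exists_padicInt_conj_of_intertwine p (fun hp₂ => ?_) h₂
    exact (Nat.prime_iff_prime_int.1 hp.out).not_isUnit (hdet.isUnit_of_dvd' hp₁ hp₂)
  · exact exists_padicInt_conj_of_intertwine p hp₁ h₁

end Matrix

/-- The matrices `A = [[0,1],[-5,0]]` and `B = [[-1,2],[-3,1]]` (both with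
characteristic polynomial `x² + 5`) are locally conjugate: `ℤ_p`-conjugate for every prime. -/
theorem locally_conjugate_example :
    ∀ (p : ℕ) [Fact p.Prime],
      ∃ C : Matrix (Fin 2) (Fin 2) ℤ_[p], IsUnit C.det ∧
        (!![0, 1; -5, 0] : Matrix (Fin 2) (Fin 2) ℤ).map (Int.cast : ℤ → ℤ_[p]) * C
          = C * (!![-1, 2; -3, 1] : Matrix (Fin 2) (Fin 2) ℤ).map (Int.cast : ℤ → ℤ_[p]) := by
  have hdet : IsCoprime (!![0, 1; -3, 1] : Matrix (Fin 2) (Fin 2) ℤ).det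
      (!![1, 0; -1, 2] : Matrix (Fin 2) (Fin 2) ℤ).det :=
    ⟨1, -1, by decide⟩
  exact Matrix.exists_padicInt_conj_of_intertwine_coprime (by decide) (by decide) hdet
end

section
/- Let R = ℤ[√2] be the ring of integers of ℚ(√2). Then the matrices A = [[−1, 3], [3, 1]] and B = [[0, 10], [1, 0]] (both with characteristic polynomial x² − 10, B being the companion matrix of x² − 10) are R-conjugate: there exists C ∈ R^{2×2} with det C a unit of R and A·C = C·B. -/
/-!
A `2 × 2` matrix `A` satisfies `A² = (tr A) A - (det A)` (Cayley–Hamilton), so for any vector `v`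
the matrix `[v | A v]` intertwines `A` with the companion matrix of its characteristic polynomial,
and it is a conjugation as soon as `det [v | A v]` is a unit.
Over `ℤ` no such `v` exists for `A = [[-1, 3], [3, 1]]`, because `A` belongs to the non-principal
ideal class of `ℤ[√10]`; that class becomes principal after adjoining `√2`, and correspondingly
`v = (1, √2)` gives `det [v | A v] = 2√2 - 3 = -(√2 - 1)²`, a unit of `ℤ[√2]`.
-/

namespace Matrix

variable {R : Type*} [CommRing R]

def krylovMatrix (A : Matrix (Fin 2) (Fin 2) R) (v : Fin 2 → R) : Matrix (Fin 2) (Fin 2) R :=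
  (of ![v, A *ᵥ v])ᵀ

theorem mul_krylovMatrix (A : Matrix (Fin 2) (Fin 2) R) (v : Fin 2 → R) :
    A * krylovMatrix A v = krylovMatrix A v * !![0, -A.det; 1, A.trace] := by
  ext i j
  fin_cases i <;> fin_cases j <;>
    simp [krylovMatrix, mul_apply, Fin.sum_univ_two, det_fin_two, trace_fin_two] <;> ring

theorem det_krylovMatrix (A : Matrix (Fin 2) (Fin 2) R) (v : Fin 2 → R) :
    (krylovMatrix A v).det = v 0 * (A *ᵥ v) 1 - v 1 * (A *ᵥ v) 0 := by
  simp [krylovMatrix, det_fin_two, mul_comm]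

end Matrix

open Matrix

/-- Over `R = ℤ[√2]`, the ring of integers of `ℚ(√2)`, the matrices
`A = [[-1,3],[3,1]]` and `B = [[0,10],[1,0]]` (both with characteristic polynomial
`x² − 10`) are `R`-conjugate. -/
theorem conjugate_over_Zsqrt2 :
    ∃ C : Matrix (Fin 2) (Fin 2) (ℤ√2), IsUnit C.det ∧
      (!![-1, 3; 3, 1] : Matrix (Fin 2) (Fin 2) ℤ).map (Int.cast : ℤ → ℤ√2) * C
        = C * (!![0, 10; 1, 0] : Matrix (Fin 2) (Fin 2) ℤ).map (Int.cast : ℤ → ℤ√2) := by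
  set A := (!![-1, 3; 3, 1] : Matrix (Fin 2) (Fin 2) ℤ).map (Int.cast : ℤ → ℤ√2)
  have hcompanion : !![0, -A.det; 1, A.trace]
      = (!![0, 10; 1, 0] : Matrix (Fin 2) (Fin 2) ℤ).map (Int.cast : ℤ → ℤ√2) := by
    refine Matrix.ext fun i j => ?_
    fin_cases i <;> fin_cases j <;> norm_num [A, det_fin_two, trace_fin_two]
  have hAv : A *ᵥ ![1, Zsqrtd.sqrtd] = ![⟨-1, 3⟩, ⟨3, 1⟩] := by
    ext i : 1
    fin_cases i <;> simp [A, mulVec, dotProduct, Fin.sum_univ_two, Zsqrtd.ext_iff]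
  have hdet : (krylovMatrix A ![1, Zsqrtd.sqrtd]).det * ⟨-3, -2⟩ = 1 := by
    simp [det_krylovMatrix, hAv, Zsqrtd.ext_iff]
  exact ⟨_, IsUnit.of_mul_eq_one _ hdet, hcompanion ▸ mul_krylovMatrix A _⟩
end

section
/- Let A = [[−2, 37], [3, 3]] and B = [[0, 117], [1, 1]], both 2×2 integer matrices with characteristic polynomial x² − x − 117. Then A and B are ℤ_p-conjugate for every prime p (i.e., locally conjugate), but A and B are not ℤ-conjugate: there is no C ∈ ℤ^{2×2} with det C ∈ {1, −1} and A·C = C·B. -/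
/-!
Locally it suffices to find an integral intertwiner whose determinant is prime to `p`:
`!![1, -2; 0, 3]` (determinant `3`) for `p ≠ 3` and `!![0, 37; 1, 3]` (determinant `-37`)
for `p = 3`.

Globally, `B` is the companion matrix of `x² - x - 117`, so an intertwiner is `C = (v | A v)`
and `det C = 3a² + 5ac - 37c²` for `v = (a, c)`. Thus `12 det C = (6a + 5c)² - 469 c²`, and
`det C = ±1` gives `X² - 469 Y² = ±12`. The sign `+` is impossible mod 7. For the sign `-`,
multiplying by the norm-one unit `137215 - 6336 √469` descends to a solution with `|Y| ≤ 41`,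
and there is none.
-/

theorem PadicInt.isUnit_intCast_iff_s17 {p : ℕ} [Fact p.Prime] (k : ℤ) :
    IsUnit (k : ℤ_[p]) ↔ ¬ (p : ℤ) ∣ k := by
  rw [← not_iff_not, not_isUnit_iff, not_not, norm_int_lt_one_iff_dvd]

theorem Matrix.exists_padicInt_conj_of_intertwiner {n : Type*} [Fintype n] [DecidableEq n]
    (p : ℕ) [Fact p.Prime] {A B C : Matrix n n ℤ} (hAC : A * C = C * B)
    (hdet : ¬ (p : ℤ) ∣ C.det) :
    ∃ C' : Matrix n n ℤ_[p], IsUnit C'.det ∧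
      A.map (Int.cast : ℤ → ℤ_[p]) * C' = C' * B.map (Int.cast : ℤ → ℤ_[p]) := by
  refine ⟨C.map Int.cast, ?_, ?_⟩
  · rwa [← Int.cast_det, PadicInt.isUnit_intCast_iff_s17]
  · have := congrArg (·.map (Int.castRingHom ℤ_[p])) hAC
    rwa [Matrix.map_mul, Matrix.map_mul] at this

theorem Matrix.det_eq_of_mul_eq_mul_companion {R : Type*} [CommRing R]
    {A C : Matrix (Fin 2) (Fin 2) R} {b e : R} (h : A * C = C * !![0, b; 1, e]) :
    C.det = A 1 0 * C 0 0 ^ 2 + (A 1 1 - A 0 0) * C 0 0 * C 1 0 - A 0 1 * C 1 0 ^ 2 := by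
  have h00 := congrFun (congrFun h 0) 0
  have h10 := congrFun (congrFun h 1) 0
  simp only [Matrix.mul_apply, Fin.sum_univ_two, Matrix.of_apply, Matrix.cons_val',
    Matrix.cons_val_zero, Matrix.cons_val_one, Matrix.empty_val', Matrix.cons_val_fin_one] at h00 h10
  rw [Matrix.det_fin_two]
  linear_combination C 1 0 * h00 - C 0 0 * h10

theorem Int.pell_descent {D N u v x y : ℤ} (hN : N < 0) (hunit : u ^ 2 - D * v ^ 2 = 1)
    (hu : 0 < u) (hv : 0 < v) (hx : 0 ≤ x) (hy : 0 ≤ y) (h : x ^ 2 - D * y ^ 2 = N)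
    (hlarge : -N * v ^ 2 < 2 * (u - 1) * y ^ 2) :
    (u * x - D * v * y) ^ 2 - D * (u * y - v * x) ^ 2 = N ∧
      0 < u * y - v * x ∧ u * y - v * x < y := by
  have hvx : (v * x) ^ 2 = (u ^ 2 - 1) * y ^ 2 + N * v ^ 2 := by
    linear_combination v ^ 2 * h - y ^ 2 * hunit
  refine ⟨by linear_combination (u ^ 2 - D * v ^ 2) * h + N * hunit, ?_, ?_⟩
  · have : (v * x) ^ 2 < (u * y) ^ 2 := by nlinarith
    linarith [lt_of_pow_lt_pow_left₀ 2 (mul_nonneg hu.le hy) this]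
  · have : ((u - 1) * y) ^ 2 < (v * x) ^ 2 := by nlinarith
    linarith [lt_of_pow_lt_pow_left₀ 2 (mul_nonneg hv.le hx) this]

theorem Int.sq_sub_mul_sq_ne_of_forall_small {D N u v : ℤ} (hN : N < 0)
    (hunit : u ^ 2 - D * v ^ 2 = 1) (hu : 0 < u) (hv : 0 < v)
    (hsmall : ∀ x y : ℤ, 0 ≤ x → 0 ≤ y → 2 * (u - 1) * y ^ 2 ≤ -N * v ^ 2 → x ^ 2 - D * y ^ 2 ≠ N)
    (x y : ℤ) : x ^ 2 - D * y ^ 2 ≠ N := by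
  rw [← sq_abs x, ← sq_abs y]
  intro h
  by_cases hsm : 2 * (u - 1) * |y| ^ 2 ≤ -N * v ^ 2
  · exact hsmall _ _ (abs_nonneg x) (abs_nonneg y) hsm h
  obtain ⟨h', hpos, hlt⟩ :=
    Int.pell_descent hN hunit hu hv (abs_nonneg x) (abs_nonneg y) h (not_le.mp hsm)
  exact Int.sq_sub_mul_sq_ne_of_forall_small hN hunit hu hv hsmall _ _ h'
termination_by y.natAbs
decreasing_by
  rw [← Int.natAbs_abs y]
  exact Int.natAbs_lt_natAbs_of_nonneg_of_lt hpos.le hlt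

theorem Int.sq_sub_469_mul_sq_ne_twelve (x y : ℤ) : x ^ 2 - 469 * y ^ 2 ≠ 12 := by
  intro h
  have h7 := congrArg (Int.cast : ℤ → ZMod 7) h
  push_cast at h7
  generalize (x : ZMod 7) = a, (y : ZMod 7) = b at h7
  revert a b
  decide

theorem Int.sq_sub_469_mul_sq_ne_neg_twelve (x y : ℤ) : x ^ 2 - 469 * y ^ 2 ≠ -12 := by
  refine Int.sq_sub_mul_sq_ne_of_forall_small (u := 137215) (v := 6336) (by norm_num) (by norm_num)
    (by norm_num) (by norm_num) (fun x y hx hy hsmall h => ?_) x y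
  lift x to ℕ using hx
  lift y to ℕ using hy
  have hy : y < 42 := by nlinarith
  have hsq : x ^ 2 + 12 = 469 * y ^ 2 := by zify; linarith
  have hy0 : 0 < y := Nat.pos_of_ne_zero (by rintro rfl; omega)
  have hlo : 21 * y ≤ x := (Nat.pow_le_pow_iff_left two_ne_zero).mp (by nlinarith)
  have hhi : x < 22 * y := (Nat.pow_lt_pow_iff_left two_ne_zero).mp (by nlinarith)
  obtain ⟨d, rfl⟩ := Nat.exists_eq_add_of_le hlo
  exact (by decide : ∀ y < 42, ∀ d < y, (21 * y + d) ^ 2 + 12 ≠ 469 * y ^ 2) y hy d (by omega) hsq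

/-- The matrices `A = [[-2,37],[3,3]]` and `B = [[0,117],[1,1]]` (both with
characteristic polynomial `x² − x − 117`) are `ℤ_p`-conjugate for every prime `p`, but are
not `ℤ`-conjugate. -/
theorem locally_conjugate_not_int_conjugate_example :
    (∀ (p : ℕ) [Fact p.Prime],
      ∃ C : Matrix (Fin 2) (Fin 2) ℤ_[p], IsUnit C.det ∧
        (!![-2, 37; 3, 3] : Matrix (Fin 2) (Fin 2) ℤ).map (Int.cast : ℤ → ℤ_[p]) * C
          = C * (!![0, 117; 1, 1] : Matrix (Fin 2) (Fin 2) ℤ).map (Int.cast : ℤ → ℤ_[p])) ∧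
    ¬ ∃ C : Matrix (Fin 2) (Fin 2) ℤ, (C.det = 1 ∨ C.det = -1) ∧
      (!![-2, 37; 3, 3] : Matrix (Fin 2) (Fin 2) ℤ) * C
        = C * (!![0, 117; 1, 1] : Matrix (Fin 2) (Fin 2) ℤ) := by
  refine ⟨fun p hp => ?_, ?_⟩
  · by_cases hp3 : p = 3
    · subst hp3
      exact Matrix.exists_padicInt_conj_of_intertwiner 3 (C := !![0, 37; 1, 3]) (by decide)
        (by norm_num [Matrix.det_fin_two_of])
    · refine Matrix.exists_padicInt_conj_of_intertwiner p (C := !![1, -2; 0, 3]) (by decide) ?_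
      norm_num [Matrix.det_fin_two_of]
      exact_mod_cast (Nat.prime_dvd_prime_iff_eq hp.out Nat.prime_three).not.mpr hp3
  · rintro ⟨C, hdet, hAC⟩
    have hQ : C.det = 3 * C 0 0 ^ 2 + 5 * C 0 0 * C 1 0 - 37 * C 1 0 ^ 2 := by
      rw [Matrix.det_eq_of_mul_eq_mul_companion hAC]
      norm_num
    rcases hdet with h | h
    · exact Int.sq_sub_469_mul_sq_ne_twelve (6 * C 0 0 + 5 * C 1 0) (C 1 0)
        (by linear_combination 12 * h - 12 * hQ)
    · exact Int.sq_sub_469_mul_sq_ne_neg_twelve (6 * C 0 0 + 5 * C 1 0) (C 1 0)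
        (by linear_combination 12 * h - 12 * hQ)
end

section
/- Let K be a field containing ℚ, let α ∈ K, and let A, B ∈ ℤ^{n×n}. Suppose v, w : {1,…,n} → K are families that are each linearly independent over ℚ and satisfy Σ_j A_{ij}·v_j = α·v_i and Σ_j B_{ij}·w_j = α·w_i for all i. If there exists a nonzero γ ∈ K with span_ℤ{v_1,…,v_n} = γ·span_ℤ{w_1,…,w_n} (equality of ℤ-submodules of K), then A and B are ℤ-conjugate: there exists C ∈ ℤ^{n×n} with det C ∈ {1, −1} and C⁻¹·A·C = B. -/
/-!
The span equality says that `v` and `γ • w` are two `ℤ`-bases of one lattice, so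
`v = P (γ • w)` and `γ • w = Q v` for integer matrices `P`, `Q`, and `ℚ`-independence of `v`
forces `P Q = 1`. Both `A P` and `P B` send `γ • w` to `α • v`, so independence of `γ • w`
gives `A P = P B`, i.e. `P⁻¹ A P = B`.
-/

open Matrix

section

variable {ι κ R K : Type*} [Fintype κ] [CommSemiring R] [Semiring K] [Algebra R K]

theorem Matrix.map_algebraMap_mulVec_apply (P : Matrix ι κ R) (u : κ → K) (i : ι) :
    (P.map (algebraMap R K) *ᵥ u) i = ∑ j, P i j • u j := by
  simp only [mulVec, dotProduct, map_apply, Algebra.smul_def]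

theorem exists_matrix_mulVec_eq_of_span_range_le {v : ι → K} {u : κ → K}
    (h : Submodule.span R (Set.range v) ≤ Submodule.span R (Set.range u)) :
    ∃ P : Matrix ι κ R, v = P.map (algebraMap R K) *ᵥ u := by
  have hmem i : ∃ c : κ → R, ∑ j, c j • u j = v i :=
    (Submodule.mem_span_range_iff_exists_fun R).mp (h (Submodule.subset_span ⟨i, rfl⟩))
  choose P hP using hmem
  exact ⟨Matrix.of P, funext fun i => by rw [map_algebraMap_mulVec_apply, ← hP]; rfl⟩

theorem LinearIndependent.eq_of_map_algebraMap_mulVec_eq {u : κ → K}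
    (hu : LinearIndependent R u) {P Q : Matrix ι κ R}
    (h : P.map (algebraMap R K) *ᵥ u = Q.map (algebraMap R K) *ᵥ u) : P = Q := by
  ext i j
  refine Fintype.linearIndependent_iffₛ.mp hu _ _ ?_ j
  simpa only [map_algebraMap_mulVec_apply] using congrFun h i

end

theorem Matrix.inv_mul_mul_eq_of_mul_eq_one {n R : Type*} [Fintype n] [DecidableEq n] [CommRing R]
    {A B P Q : Matrix n n R} (hPQ : P * Q = 1) (hAP : A * P = P * B) : P⁻¹ * A * P = B := by
  rw [inv_eq_right_inv hPQ, Matrix.mul_assoc, hAP, ← Matrix.mul_assoc, mul_eq_one_comm.mp hPQ,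
    Matrix.one_mul]

/-- Latimer–MacDuffee, sufficiency: If `A` and `B` are the matrices of
multiplication by `α` on the `ℤ`-lattices spanned by `ℚ`-linearly independent families
`v` and `w` in a field `K ⊇ ℚ`, and the two lattices differ by multiplication by a nonzero
`γ ∈ K`, then `A` and `B` are `ℤ`-conjugate. -/
theorem int_conjugate_of_equivalent_lattices
    (n : ℕ) (K : Type*) [Field K] [Algebra ℚ K] (α : K)
    (A B : Matrix (Fin n) (Fin n) ℤ) (v w : Fin n → K)
    (hv : LinearIndependent ℚ v) (hw : LinearIndependent ℚ w)
    (hAv : ∀ i, ∑ j, (A i j : K) * v j = α * v i)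
    (hBw : ∀ i, ∑ j, (B i j : K) * w j = α * w i)
    (γ : K) (hγ : γ ≠ 0)
    (hspan : Submodule.span ℤ (Set.range v)
      = Submodule.map (LinearMap.mulLeft ℤ γ) (Submodule.span ℤ (Set.range w))) :
    ∃ C : Matrix (Fin n) (Fin n) ℤ, (C.det = 1 ∨ C.det = -1) ∧ C⁻¹ * A * C = B := by
  set u : Fin n → K := γ • w
  have hu : LinearIndependent ℤ u :=
    (hw.restrict_scalars' ℤ).map' (LinearMap.mulLeft ℤ γ)
      (LinearMap.ker_eq_bot.mpr (mul_right_injective₀ hγ))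
  have hspan' : Submodule.span ℤ (Set.range v) = Submodule.span ℤ (Set.range u) := by
    rw [hspan, Submodule.map_span, ← Set.range_comp]; rfl
  obtain ⟨P, hP⟩ := exists_matrix_mulVec_eq_of_span_range_le hspan'.le
  obtain ⟨Q, hQ⟩ := exists_matrix_mulVec_eq_of_span_range_le hspan'.ge
  set φ := algebraMap ℤ K
  have hA : A.map φ *ᵥ v = α • v :=
    funext fun i => by simpa [φ, mulVec, dotProduct] using hAv i
  have hB : B.map φ *ᵥ u = α • u := by
    rw [mulVec_smul, smul_comm]
    exact congrArg (γ • ·) (funext fun i => by simpa [φ, mulVec, dotProduct] using hBw i)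
  have hPQ : P * Q = 1 := (hv.restrict_scalars' ℤ).eq_of_map_algebraMap_mulVec_eq <|
    calc (P * Q).map φ *ᵥ v
      _ = P.map φ *ᵥ u := by rw [Matrix.map_mul, ← mulVec_mulVec, ← hQ]
      _ = v := hP.symm
      _ = (1 : Matrix (Fin n) (Fin n) ℤ).map φ *ᵥ v := by
        rw [Matrix.map_one _ φ.map_zero φ.map_one, one_mulVec]
  have hAP : A * P = P * B := hu.eq_of_map_algebraMap_mulVec_eq <|
    calc (A * P).map φ *ᵥ u
      _ = A.map φ *ᵥ v := by rw [Matrix.map_mul, ← mulVec_mulVec, ← hP]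
      _ = α • v := hA
      _ = P.map φ *ᵥ (α • u) := by rw [mulVec_smul, ← hP]
      _ = (P * B).map φ *ᵥ u := by rw [← hB, mulVec_mulVec, Matrix.map_mul]
  exact ⟨P, Int.isUnit_iff.mp (isUnit_det_of_right_inverse hPQ),
    inv_mul_mul_eq_of_mul_eq_one hPQ hAP⟩
end
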